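/- arXiv:2302.04529 — 7 statements merged into one kernel-verified Lean document; each statement's English description precedes it below -/
import Mathlib

section
/- Transitivity of refinement: let S^1, S^2, S^3 be specifications such that S^1 ≤ S^2 and S^2 ≤ S^3, and suppose Act_i^1 ∩ Act_o^3 = ∅ and Act_o^1 ∩ Act_i^3 = ∅. Then S^1 ≤ S^3. -/
open scoped NNReal

/-- A (raw) Timed I/O Transition System over an ambient action type `Act`
and state type `Q`.  The actual sets of input and output actions are the
fields `inputs` and `outputs`; `actTrans` is the action-labelled part of
the transition relation and `delayTrans` the delay-labelled part. -/
structure TIOTS (Act : Type) (Q : Type) where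
  init : Q
  inputs : Set Act
  outputs : Set Act
  actTrans : Q → Act → Q → Prop
  delayTrans : Q → ℝ≥0 → Q → Prop

namespace TIOTS

variable {Act Q Q1 Q2 Q3 : Type}

/-- The alphabet (action set) of a TIOTS. -/
def acts (S : TIOTS Act Q) : Set Act := S.inputs ∪ S.outputs

/-- The axioms of Timed I/O Transition Systems: inputs and outputs are
disjoint, action transitions are labelled by actions of the alphabet,
determinism (for actions and delays), time reflexivity and time additivity. -/
def IsTIOTS (S : TIOTS Act Q) : Prop :=
  Disjoint S.inputs S.outputs ∧
  (∀ q a q', S.actTrans q a q' → a ∈ S.acts) ∧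
  (∀ q a q' q'', S.actTrans q a q' → S.actTrans q a q'' → q' = q'') ∧
  (∀ q (d : ℝ≥0) q' q'', S.delayTrans q d q' → S.delayTrans q d q'' → q' = q'') ∧
  (∀ q, S.delayTrans q 0 q) ∧
  (∀ q q'' (d₁ d₂ : ℝ≥0),
    S.delayTrans q (d₁ + d₂) q'' ↔ ∃ q', S.delayTrans q d₁ q' ∧ S.delayTrans q' d₂ q'')

/-- Input-enabledness: every state accepts every input of the alphabet. -/
def InputEnabled (S : TIOTS Act Q) : Prop :=
  ∀ q, ∀ a ∈ S.inputs, ∃ q', S.actTrans q a q'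

/-- A specification is an input-enabled TIOTS. -/
def IsSpecification (S : TIOTS Act Q) : Prop :=
  S.IsTIOTS ∧ S.InputEnabled

/-- A state allows independent progress if it can delay forever, or can
delay until an output is enabled. -/
def IndependentProgress (S : TIOTS Act Q) (q : Q) : Prop :=
  (∀ d : ℝ≥0, ∃ q', S.delayTrans q d q') ∨
  (∃ (d : ℝ≥0) (q' : Q), ∃ o ∈ S.outputs,
    S.delayTrans q d q' ∧ ∃ q'', S.actTrans q' o q'')

/-- Output urgency of a state: if an output is enabled, no positive delay is. -/
def OutputUrgent (S : TIOTS Act Q) (q : Q) : Prop :=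
  ∀ o ∈ S.outputs, ∀ (q' : Q) (d : ℝ≥0) (q'' : Q),
    S.actTrans q o q' → S.delayTrans q d q'' → d = 0

/-- An implementation is a specification all of whose states are
output urgent and allow independent progress. -/
def IsImplementation (P : TIOTS Act Q) : Prop :=
  P.IsSpecification ∧ ∀ q, P.OutputUrgent q ∧ P.IndependentProgress q

/-- A locally consistent specification: every state allows independent progress. -/
def LocallyConsistent (S : TIOTS Act Q) : Prop :=
  S.IsSpecification ∧ ∀ q, S.IndependentProgress q

/-- Refinement `S ≤ T` (including the side conditions on the alphabets). -/
def Refines (S : TIOTS Act Q1) (T : TIOTS Act Q2) : Prop :=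
  Disjoint S.inputs T.outputs ∧ Disjoint S.outputs T.inputs ∧
  S.inputs ⊆ T.inputs ∧ T.outputs ⊆ S.outputs ∧
  ∃ R : Q1 → Q2 → Prop,
    R S.init T.init ∧
    ∀ s t, R s t →
      (∀ a ∈ T.inputs ∩ S.inputs, ∀ t', T.actTrans t a t' →
        ∃ s', S.actTrans s a s' ∧ R s' t') ∧
      (∀ a ∈ T.inputs \ S.inputs, ∀ t', T.actTrans t a t' → R s t') ∧
      (∀ a ∈ S.outputs ∩ T.outputs, ∀ s', S.actTrans s a s' →
        ∃ t', T.actTrans t a t' ∧ R s' t') ∧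
      (∀ a ∈ S.outputs \ T.outputs, ∀ s', S.actTrans s a s' → R s' t) ∧
      (∀ (d : ℝ≥0) (s' : Q1), S.delayTrans s d s' →
        ∃ t', T.delayTrans t d t' ∧ R s' t')

/-- `Mod S P` : `P` belongs to `mod(S)`, i.e. `P` is an implementation over
the alphabet of `S` satisfying (refining) `S`. -/
def Mod (S : TIOTS Act Q1) (P : TIOTS Act Q2) : Prop :=
  P.IsImplementation ∧ P.inputs = S.inputs ∧ P.outputs = S.outputs ∧ P.Refines S

/-- The TIOTS obtained from `S` by replacing the initial state by `q`. -/
def withInit (S : TIOTS Act Q) (q : Q) : TIOTS Act Q := { S with init := q }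

/-- Reachability by finite sequences of action and delay transitions. -/
inductive Reach (S : TIOTS Act Q) : Q → Q → Prop where
  | refl (q : Q) : Reach S q q
  | act {q q' q'' : Q} (a : Act) : S.actTrans q a q' → Reach S q' q'' → Reach S q q''
  | delay {q q' q'' : Q} (d : ℝ≥0) : S.delayTrans q d q' → Reach S q' q'' → Reach S q q''

/-- The set of error states relative to a set `X`. -/
def errSet (S : TIOTS Act Q) (X : Set Q) : Set Q :=
  { q | (∃ d : ℝ≥0, ¬ ∃ q', S.delayTrans q d q') ∧
        ∀ (d : ℝ≥0), ∀ o ∈ S.outputs, ∀ q', S.delayTrans q d q' →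
          ((¬ ∃ q'', S.actTrans q' o q'') ∨ ∀ q'', S.actTrans q' o q'' → q'' ∈ X) }

/-- The operator `Θ` whose greatest fixpoint is the set of consistent states. -/
def Theta (S : TIOTS Act Q) (X : Set Q) : Set Q :=
  (Set.univ \ S.errSet (Set.univ \ X)) ∩
  { q | ∀ d : ℝ≥0,
      (∀ q', S.delayTrans q d q' →
        (q' ∈ X ∧ ∀ i ∈ S.inputs, ∃ q'', q'' ∈ X ∧ S.actTrans q' i q'')) ∨
      (∃ d' : ℝ≥0, d' ≤ d ∧ ∃ q' q'', q' ∈ X ∧ q'' ∈ X ∧ ∃ o ∈ S.outputs,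
        S.delayTrans q d' q' ∧ S.actTrans q' o q'' ∧
        ∀ i ∈ S.inputs, ∃ q''', q''' ∈ X ∧ S.actTrans q' i q''') }

/-- The set of consistent states: the greatest fixpoint of the monotone
operator `Θ`, given by Knaster–Tarski as the union of all postfixed points. -/
def consSet (S : TIOTS Act Q) : Set Q := ⋃₀ { X | X ⊆ S.Theta X }

/-- Adversarial pruning `S^Δ`: restrict the states to the consistent ones and
restrict the transition relation accordingly. -/
def prune (S : TIOTS Act Q) (h : S.init ∈ S.consSet) :
    TIOTS Act {q : Q // q ∈ S.consSet} where
  init := ⟨S.init, h⟩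
  inputs := S.inputs
  outputs := S.outputs
  actTrans := fun q a q' => S.actTrans q.1 a q'.1
  delayTrans := fun q d q' => S.delayTrans q.1 d q'.1

/-- Conjunction of TIOTSs. -/
def conj (S : TIOTS Act Q1) (T : TIOTS Act Q2) : TIOTS Act (Q1 × Q2) where
  init := (S.init, T.init)
  inputs := S.inputs ∪ T.inputs
  outputs := S.outputs ∪ T.outputs
  actTrans := fun q a q' =>
    (a ∈ S.acts ∩ T.acts ∧ S.actTrans q.1 a q'.1 ∧ T.actTrans q.2 a q'.2) ∨
    (a ∈ S.acts \ T.acts ∧ S.actTrans q.1 a q'.1 ∧ q'.2 = q.2) ∨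
    (a ∈ T.acts \ S.acts ∧ T.actTrans q.2 a q'.2 ∧ q'.1 = q.1)
  delayTrans := fun q d q' => S.delayTrans q.1 d q'.1 ∧ T.delayTrans q.2 d q'.2

/-- Parallel composition of TIOTSs. -/
def par (S : TIOTS Act Q1) (T : TIOTS Act Q2) : TIOTS Act (Q1 × Q2) where
  init := (S.init, T.init)
  inputs := (S.inputs \ T.outputs) ∪ (T.inputs \ S.outputs)
  outputs := S.outputs ∪ T.outputs
  actTrans := fun q a q' =>
    (a ∈ S.acts ∩ T.acts ∧ S.actTrans q.1 a q'.1 ∧ T.actTrans q.2 a q'.2) ∨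
    (a ∈ S.acts \ T.acts ∧ S.actTrans q.1 a q'.1 ∧ q'.2 = q.2) ∨
    (a ∈ T.acts \ S.acts ∧ T.actTrans q.2 a q'.2 ∧ q'.1 = q.1)
  delayTrans := fun q d q' => S.delayTrans q.1 d q'.1 ∧ T.delayTrans q.2 d q'.2

/-- States of the quotient: pairs of states, a universal state and an error state. -/
inductive QSt (Q1 Q2 : Type) where
  | st : Q1 → Q2 → QSt Q1 Q2
  | univ : QSt Q1 Q2
  | err : QSt Q1 Q2

/-- Action transitions of the quotient `T \\ S`. -/
def quotAct (T : TIOTS Act Q1) (S : TIOTS Act Q2) :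
    QSt Q1 Q2 → Act → QSt Q1 Q2 → Prop
  | QSt.st qT qS, a, QSt.st qT' qS' =>
      (a ∈ S.acts ∩ T.acts ∧ T.actTrans qT a qT' ∧ S.actTrans qS a qS') ∨
      (a ∈ S.acts \ T.acts ∧ S.actTrans qS a qS' ∧ qT' = qT) ∨
      (a ∈ T.acts \ S.acts ∧ T.actTrans qT a qT' ∧ qS' = qS)
  | QSt.st _ qS, a, QSt.univ => a ∈ S.outputs ∧ ¬ ∃ qS', S.actTrans qS a qS'
  | QSt.st qT qS, a, QSt.err =>
      a ∈ S.outputs ∩ T.outputs ∧ (¬ ∃ qT', T.actTrans qT a qT') ∧ ∃ qS', S.actTrans qS a qS'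
  | QSt.univ, a, QSt.univ =>
      a ∈ (T.inputs ∪ S.outputs) ∪ ((T.outputs \ S.outputs) ∪ (S.inputs \ T.inputs))
  | QSt.err, a, QSt.err => a ∈ T.inputs ∪ S.outputs
  | _, _, _ => False

/-- Delay transitions of the quotient `T \\ S`. -/
def quotDelay (T : TIOTS Act Q1) (S : TIOTS Act Q2) :
    QSt Q1 Q2 → ℝ≥0 → QSt Q1 Q2 → Prop
  | QSt.st qT qS, d, QSt.st qT' qS' => T.delayTrans qT d qT' ∧ S.delayTrans qS d qS'
  | QSt.st _ qS, d, QSt.univ => ¬ ∃ qS', S.delayTrans qS d qS'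
  | QSt.univ, _, QSt.univ => True
  | _, _, _ => False

/-- The quotient `T \\ S`. -/
def quot (T : TIOTS Act Q1) (S : TIOTS Act Q2) : TIOTS Act (QSt Q1 Q2) where
  init := QSt.st T.init S.init
  inputs := T.inputs ∪ S.outputs
  outputs := (T.outputs \ S.outputs) ∪ (S.inputs \ T.inputs)
  actTrans := T.quotAct S
  delayTrans := T.quotDelay S

end TIOTS

/-- Clock guards: Boolean formulas over atomic clock constraints `x ≺ n`. -/
inductive ClockGuard (C : Type) where
  | tt : ClockGuard C
  | ff : ClockGuard C
  | lt : C → ℕ → ClockGuard C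
  | le : C → ℕ → ClockGuard C
  | gt : C → ℕ → ClockGuard C
  | ge : C → ℕ → ClockGuard C
  | eq : C → ℕ → ClockGuard C
  | and : ClockGuard C → ClockGuard C → ClockGuard C
  | or : ClockGuard C → ClockGuard C → ClockGuard C
  | not : ClockGuard C → ClockGuard C

namespace ClockGuard

variable {C C' : Type}

/-- Satisfaction of a clock guard by a clock valuation. -/
def sat (v : C → ℝ≥0) : ClockGuard C → Prop
  | tt => True
  | ff => False
  | lt x n => v x < (n : ℝ≥0)
  | le x n => v x ≤ (n : ℝ≥0)
  | gt x n => (n : ℝ≥0) < v x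
  | ge x n => (n : ℝ≥0) ≤ v x
  | eq x n => v x = (n : ℝ≥0)
  | and g₁ g₂ => sat v g₁ ∧ sat v g₂
  | or g₁ g₂ => sat v g₁ ∨ sat v g₂
  | not g => ¬ sat v g

/-- Renaming of the clocks of a guard. -/
def map (f : C → C') : ClockGuard C → ClockGuard C'
  | tt => tt
  | ff => ff
  | lt x n => lt (f x) n
  | le x n => le (f x) n
  | gt x n => gt (f x) n
  | ge x n => ge (f x) n
  | eq x n => eq (f x) n
  | and g₁ g₂ => and (map f g₁) (map f g₂)
  | or g₁ g₂ => or (map f g₁) (map f g₂)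
  | not g => not (map f g)

end ClockGuard

/-- A Timed I/O Automaton over action type `Act`, location type `L`
and clock type `C`. -/
structure TIOA (Act L C : Type) where
  init : L
  inputs : Set Act
  outputs : Set Act
  edges : Set (L × Act × ClockGuard C × Set C × L)
  inv : L → ClockGuard C

namespace TIOA

variable {Act L C L1 L2 C1 C2 : Type}

/-- The alphabet (action set) of a TIOA. -/
def acts (A : TIOA Act L C) : Set Act := A.inputs ∪ A.outputs

open Classical in
/-- Reset the clocks in `c` to zero. -/
noncomputable def resetVal (v : C → ℝ≥0) (c : Set C) : C → ℝ≥0 :=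
  fun x => if x ∈ c then 0 else v x

/-- The semantics of a TIOA as a TIOTS. -/
noncomputable def sem (A : TIOA Act L C) : TIOTS Act (L × (C → ℝ≥0)) where
  init := (A.init, fun _ => 0)
  inputs := A.inputs
  outputs := A.outputs
  actTrans := fun q a q' =>
    ∃ g c, (q.1, a, g, c, q'.1) ∈ A.edges ∧ ClockGuard.sat q.2 g ∧
      q'.2 = resetVal q.2 c ∧ ClockGuard.sat q'.2 (A.inv q'.1)
  delayTrans := fun q d q' =>
    q'.1 = q.1 ∧ q'.2 = (fun x => q.2 x + d) ∧
    ClockGuard.sat q'.2 (A.inv q.1) ∧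
    ∀ d' : ℝ≥0, d' < d → ClockGuard.sat (fun x => q.2 x + d') (A.inv q.1)

/-- Conjunction of TIOAs (with disjoint clock sets, realized as a sum type). -/
def conjA (A : TIOA Act L1 C1) (B : TIOA Act L2 C2) :
    TIOA Act (L1 × L2) (C1 ⊕ C2) where
  init := (A.init, B.init)
  inputs := A.inputs ∪ B.inputs
  outputs := A.outputs ∪ B.outputs
  edges := { e |
    (∃ l1 l2 a g1 g2 c1 c2 l1' l2',
      e = ((l1, l2), a,
            ClockGuard.and (ClockGuard.map Sum.inl g1) (ClockGuard.map Sum.inr g2),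
            Sum.inl '' c1 ∪ Sum.inr '' c2, (l1', l2')) ∧
      a ∈ A.acts ∩ B.acts ∧ (l1, a, g1, c1, l1') ∈ A.edges ∧ (l2, a, g2, c2, l2') ∈ B.edges) ∨
    (∃ l1 l2 a g1 c1 l1',
      e = ((l1, l2), a, ClockGuard.map Sum.inl g1, Sum.inl '' c1, (l1', l2)) ∧
      a ∈ A.acts \ B.acts ∧ (l1, a, g1, c1, l1') ∈ A.edges) ∨
    (∃ l1 l2 a g2 c2 l2',
      e = ((l1, l2), a, ClockGuard.map Sum.inr g2, Sum.inr '' c2, (l1, l2')) ∧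
      a ∈ B.acts \ A.acts ∧ (l2, a, g2, c2, l2') ∈ B.edges) }
  inv := fun l =>
    ClockGuard.and (ClockGuard.map Sum.inl (A.inv l.1)) (ClockGuard.map Sum.inr (B.inv l.2))

/-- Parallel composition of TIOAs (with disjoint clock sets). -/
def parA (A : TIOA Act L1 C1) (B : TIOA Act L2 C2) :
    TIOA Act (L1 × L2) (C1 ⊕ C2) where
  init := (A.init, B.init)
  inputs := (A.inputs \ B.outputs) ∪ (B.inputs \ A.outputs)
  outputs := A.outputs ∪ B.outputs
  edges := { e |
    (∃ l1 l2 a g1 g2 c1 c2 l1' l2',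
      e = ((l1, l2), a,
            ClockGuard.and (ClockGuard.map Sum.inl g1) (ClockGuard.map Sum.inr g2),
            Sum.inl '' c1 ∪ Sum.inr '' c2, (l1', l2')) ∧
      a ∈ A.acts ∩ B.acts ∧ (l1, a, g1, c1, l1') ∈ A.edges ∧ (l2, a, g2, c2, l2') ∈ B.edges) ∨
    (∃ l1 l2 a g1 c1 l1',
      e = ((l1, l2), a, ClockGuard.map Sum.inl g1, Sum.inl '' c1, (l1', l2)) ∧
      a ∈ A.acts \ B.acts ∧ (l1, a, g1, c1, l1') ∈ A.edges) ∨
    (∃ l1 l2 a g2 c2 l2',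
      e = ((l1, l2), a, ClockGuard.map Sum.inr g2, Sum.inr '' c2, (l1, l2')) ∧
      a ∈ B.acts \ A.acts ∧ (l2, a, g2, c2, l2') ∈ B.edges) }
  inv := fun l =>
    ClockGuard.and (ClockGuard.map Sum.inl (A.inv l.1)) (ClockGuard.map Sum.inr (B.inv l.2))

/-- The canonical bijection between the states of `⟦A¹ ∧ A²⟧` (resp. `⟦A¹ ∥ A²⟧`)
and the states of `⟦A¹⟧ ∧ ⟦A²⟧` (resp. `⟦A¹⟧ ∥ ⟦A²⟧`):
`((l¹,l²), v) ↦ ((l¹, v∘inl), (l², v∘inr))`. -/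
def stateMap {L1 L2 C1 C2 : Type} (q : (L1 × L2) × ((C1 ⊕ C2) → ℝ≥0)) :
    (L1 × (C1 → ℝ≥0)) × (L2 × (C2 → ℝ≥0)) :=
  ((q.1.1, fun x => q.2 (Sum.inl x)), (q.1.2, fun x => q.2 (Sum.inr x)))

end TIOA

/-- Transitivity of refinement. -/
theorem refines_trans {Act Q1 Q2 Q3 : Type}
    (S1 : TIOTS Act Q1) (S2 : TIOTS Act Q2) (S3 : TIOTS Act Q3)
    (hS1 : S1.IsSpecification) (hS2 : S2.IsSpecification) (hS3 : S3.IsSpecification)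
    (h12 : S1.Refines S2) (h23 : S2.Refines S3)
    (h13io : Disjoint S1.inputs S3.outputs)
    (h13oi : Disjoint S1.outputs S3.inputs) :
    S1.Refines S3 := by
  classical
  obtain ⟨_, _, hi12, ho12, R12, hR12init, hR12⟩ := h12
  obtain ⟨_, _, hi23, ho23, R23, hR23init, hR23⟩ := h23
  refine ⟨h13io, h13oi, hi12.trans hi23, ho23.trans ho12,
    fun s u => ∃ t, R12 s t ∧ R23 t u, ⟨S2.init, hR12init, hR23init⟩, ?_⟩
  rintro s u ⟨t, h12st, h23tu⟩
  obtain ⟨c1, c2, c3, c4, c5⟩ := hR12 s t h12st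
  obtain ⟨d1, d2, d3, d4, d5⟩ := hR23 t u h23tu
  refine ⟨?_, ?_, ?_, ?_, ?_⟩
  · rintro a ⟨ha3, ha1⟩ u' hu
    obtain ⟨t', ht', hR⟩ := d1 a ⟨ha3, hi12 ha1⟩ u' hu
    obtain ⟨s', hs', hR'⟩ := c1 a ⟨hi12 ha1, ha1⟩ t' ht'
    exact ⟨s', hs', t', hR', hR⟩
  · rintro a ⟨ha3, ha1⟩ u' hu
    by_cases h2 : a ∈ S2.inputs
    · obtain ⟨t', ht', hR⟩ := d1 a ⟨ha3, h2⟩ u' hu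
      exact ⟨t', c2 a ⟨h2, ha1⟩ t' ht', hR⟩
    · exact ⟨t, h12st, d2 a ⟨ha3, h2⟩ u' hu⟩
  · rintro a ⟨ha1, ha3⟩ s' hs
    obtain ⟨t', ht', hR⟩ := c3 a ⟨ha1, ho23 ha3⟩ s' hs
    obtain ⟨u', hu', hR'⟩ := d3 a ⟨ho23 ha3, ha3⟩ t' ht'
    exact ⟨u', hu', t', hR, hR'⟩
  · rintro a ⟨ha1, ha3⟩ s' hs
    by_cases h2 : a ∈ S2.outputs
    · obtain ⟨t', ht', hR⟩ := c3 a ⟨ha1, h2⟩ s' hs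
      exact ⟨t', hR, d4 a ⟨h2, ha3⟩ t' ht'⟩
    · exact ⟨t, c4 a ⟨ha1, h2⟩ s' hs, h23tu⟩
  · intro d s' hs
    obtain ⟨t', ht', hR⟩ := c5 d s' hs
    obtain ⟨u', hu', hR'⟩ := d5 d t' ht'
    exact ⟨u', hu', t', hR, hR'⟩
end

section
/- Every locally consistent specification is consistent: if S is a specification in which every state allows independent progress, then there exists an implementation P over the same alphabet as S with P ≤ S. -/
open scoped NNReal

/-
An implementation is carved out of `S` by letting every state commit to a deadline: a state
that can delay forever commits to `∞`, any other state to a delay after which, by independent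
progress, some output is enabled. The implementation runs on pairs `(q, r)` of a state and its
remaining deadline: it delays only while `r` allows, emits outputs only when `r = 0`, and commits
afresh after every action. Output urgency is then built in, independent progress is preserved
because time additivity and determinism let the deadline decrease along delays, and forgetting
the deadline is a refinement into `S`.
-/

open scoped ENNReal

namespace TIOTS

variable {Act Q : Type} (S : TIOTS Act Q)

def CanDelayForever (q : Q) : Prop := ∀ d : ℝ≥0, ∃ q', S.delayTrans q d q'

def OutputEnabled (q : Q) : Prop := ∃ o ∈ S.outputs, ∃ q', S.actTrans q o q'

def IsDeadline (q : Q) (r : ℝ≥0∞) : Prop :=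
  (r = ⊤ ∧ S.CanDelayForever q) ∨
    ∃ d : ℝ≥0, r = d ∧ ∃ q', S.delayTrans q d q' ∧ S.OutputEnabled q'

variable {S}

theorem IndependentProgress.exists_isDeadline {q : Q} (h : S.IndependentProgress q) :
    ∃ r, S.IsDeadline q r := by
  rcases h with hforever | ⟨d, q', o, ho, hd, q'', ho'⟩
  · exact ⟨⊤, Or.inl ⟨rfl, hforever⟩⟩
  · exact ⟨d, Or.inr ⟨d, rfl, q', hd, o, ho, q'', ho'⟩⟩

theorem IsTIOTS.delayTrans_zero (hS : S.IsTIOTS) (q : Q) : S.delayTrans q 0 q :=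
  hS.2.2.2.2.1 q

theorem IsTIOTS.delayTrans_add_iff (hS : S.IsTIOTS) {q q'' : Q} {d₁ d₂ : ℝ≥0} :
    S.delayTrans q (d₁ + d₂) q'' ↔ ∃ q', S.delayTrans q d₁ q' ∧ S.delayTrans q' d₂ q'' :=
  hS.2.2.2.2.2 q q'' d₁ d₂

theorem IsTIOTS.delayTrans_of_delayTrans_add (hS : S.IsTIOTS) {q m x : Q} {d e : ℝ≥0}
    (hde : S.delayTrans q (d + e) x) (hd : S.delayTrans q d m) : S.delayTrans m e x := by
  obtain ⟨m', hm', he⟩ := hS.delayTrans_add_iff.mp hde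
  rwa [hS.2.2.2.1 q d m' m hm' hd] at he

theorem IsTIOTS.isDeadline_of_delayTrans (hS : S.IsTIOTS) {q q' : Q} {r : ℝ≥0∞} {d : ℝ≥0}
    (hr : S.IsDeadline q r) (hdr : (d : ℝ≥0∞) ≤ r) (hd : S.delayTrans q d q') :
    S.IsDeadline q' (r - d) := by
  rcases hr with ⟨rfl, hforever⟩ | ⟨e, rfl, x, hx, hout⟩
  · refine Or.inl ⟨ENNReal.top_sub_coe, fun e => ?_⟩
    obtain ⟨x, hx⟩ := hforever (d + e)
    exact ⟨x, hS.delayTrans_of_delayTrans_add hx hd⟩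
  · have hde : d ≤ e := ENNReal.coe_le_coe.mp hdr
    rw [← add_tsub_cancel_of_le hde] at hx
    exact Or.inr ⟨e - d, (ENNReal.coe_sub).symm, x, hS.delayTrans_of_delayTrans_add hx hd, hout⟩

variable (S)

noncomputable def deadline (hp : ∀ q, S.IndependentProgress q) (q : Q) : ℝ≥0∞ :=
  (hp q).exists_isDeadline.choose

theorem isDeadline_deadline (hp : ∀ q, S.IndependentProgress q) (q : Q) :
    S.IsDeadline q (S.deadline hp q) :=
  (hp q).exists_isDeadline.choose_spec

noncomputable def deadlineImpl (hp : ∀ q, S.IndependentProgress q) :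
    TIOTS Act {p : Q × ℝ≥0∞ // S.IsDeadline p.1 p.2} where
  init := ⟨(S.init, S.deadline hp S.init), S.isDeadline_deadline hp _⟩
  inputs := S.inputs
  outputs := S.outputs
  actTrans p a p' :=
    S.actTrans p.1.1 a p'.1.1 ∧ p'.1.2 = S.deadline hp p'.1.1 ∧ (a ∈ S.outputs → p.1.2 = 0)
  delayTrans p d p' :=
    (d : ℝ≥0∞) ≤ p.1.2 ∧ S.delayTrans p.1.1 d p'.1.1 ∧ p'.1.2 = p.1.2 - d

variable {S} (hp : ∀ q, S.IndependentProgress q)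

theorem deadlineImpl_delayTrans_add (hS : S.IsTIOTS)
    (p p'' : {p : Q × ℝ≥0∞ // S.IsDeadline p.1 p.2}) (d₁ d₂ : ℝ≥0) :
    (S.deadlineImpl hp).delayTrans p (d₁ + d₂) p'' ↔
      ∃ p', (S.deadlineImpl hp).delayTrans p d₁ p' ∧ (S.deadlineImpl hp).delayTrans p' d₂ p'' := by
  obtain ⟨⟨q, r⟩, hr⟩ := p
  obtain ⟨⟨q'', r''⟩, -⟩ := p''
  simp only [deadlineImpl, ENNReal.coe_add]
  constructor
  · rintro ⟨hle, hd, rfl⟩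
    obtain ⟨m, hm, hm''⟩ := hS.delayTrans_add_iff.mp hd
    have hd₁ : (d₁ : ℝ≥0∞) ≤ r := le_trans le_self_add hle
    exact ⟨⟨(m, r - d₁), hS.isDeadline_of_delayTrans hr hd₁ hm⟩, ⟨hd₁, hm, rfl⟩,
      ENNReal.le_sub_of_add_le_left ENNReal.coe_ne_top hle, hm'', (tsub_tsub _ _ _).symm⟩
  · rintro ⟨p', ⟨hd₁, hm, hr'⟩, hd₂, hm'', rfl⟩
    rw [hr'] at hd₂ ⊢
    exact ⟨add_le_of_le_tsub_left_of_le hd₁ hd₂,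
      hS.delayTrans_add_iff.mpr ⟨_, hm, hm''⟩, tsub_tsub _ _ _⟩

theorem deadlineImpl_isTIOTS (hS : S.IsTIOTS) : (S.deadlineImpl hp).IsTIOTS := by
  have hadd := deadlineImpl_delayTrans_add hp hS
  obtain ⟨hdisj, hlab, hadet, hddet, hrefl, -⟩ := hS
  refine ⟨hdisj, fun p a p' h => hlab _ a _ h.1, ?_, ?_,
    fun p => ⟨zero_le, hrefl _, by rw [ENNReal.coe_zero, tsub_zero]⟩, hadd⟩
  · rintro p a p' p'' ⟨h', hr', -⟩ ⟨h'', hr'', -⟩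
    have hq := hadet _ a _ _ h' h''
    exact Subtype.ext (Prod.ext hq (by rw [hr', hr'', hq]))
  · rintro p d p' p'' ⟨-, h', hr'⟩ ⟨-, h'', hr''⟩
    exact Subtype.ext (Prod.ext (hddet _ d _ _ h' h'') (hr'.trans hr''.symm))

theorem deadlineImpl_inputEnabled (hdisj : Disjoint S.inputs S.outputs) (hIE : S.InputEnabled) :
    (S.deadlineImpl hp).InputEnabled := by
  intro p a ha
  obtain ⟨q', hq'⟩ := hIE p.1.1 a ha
  exact ⟨⟨(q', S.deadline hp q'), S.isDeadline_deadline hp q'⟩, hq', rfl,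
    fun ho => absurd ho (Set.disjoint_left.mp hdisj ha)⟩

theorem deadlineImpl_outputUrgent (p : {p : Q × ℝ≥0∞ // S.IsDeadline p.1 p.2}) :
    (S.deadlineImpl hp).OutputUrgent p := by
  rintro o ho p' d p'' ⟨-, -, hzero⟩ ⟨hd, -⟩
  exact ENNReal.coe_eq_zero.mp (nonpos_iff_eq_zero.mp (hzero ho ▸ hd))

theorem deadlineImpl_independentProgress (hS : S.IsTIOTS)
    (p : {p : Q × ℝ≥0∞ // S.IsDeadline p.1 p.2}) :
    (S.deadlineImpl hp).IndependentProgress p := by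
  obtain ⟨⟨q, r⟩, hr⟩ := p
  rcases id hr with ⟨rfl, hforever⟩ | ⟨d, rfl, x, hx, o, ho, y, hy⟩
  · refine Or.inl fun d => ?_
    obtain ⟨q', hq'⟩ := hforever d
    exact ⟨⟨(q', ⊤ - d), hS.isDeadline_of_delayTrans hr le_top hq'⟩, le_top, hq', rfl⟩
  · have hx0 : S.IsDeadline x 0 := Or.inr ⟨0, rfl, x, hS.delayTrans_zero x, o, ho, y, hy⟩
    refine Or.inr ⟨d, ⟨(x, 0), hx0⟩, o, ho, ⟨le_rfl, hx, (tsub_self _).symm⟩,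
      ⟨(y, S.deadline hp y), S.isDeadline_deadline hp y⟩, hy, rfl, fun _ => rfl⟩

theorem deadlineImpl_refines (hdisj : Disjoint S.inputs S.outputs) :
    (S.deadlineImpl hp).Refines S := by
  refine ⟨hdisj, hdisj.symm, subset_rfl, subset_rfl, fun p q => p.1.1 = q, rfl, ?_⟩
  rintro p q rfl
  refine ⟨?_, fun a ha => absurd ha.1 ha.2, ?_, fun a ha => absurd ha.1 ha.2, ?_⟩
  · rintro a ⟨ha, -⟩ q' hq'
    exact ⟨⟨(q', S.deadline hp q'), S.isDeadline_deadline hp q'⟩,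
      ⟨hq', rfl, fun ho => absurd ho (Set.disjoint_left.mp hdisj ha)⟩, rfl⟩
  · rintro a - p' ⟨hp', -⟩
    exact ⟨p'.1.1, hp', rfl⟩
  · rintro d p' ⟨-, hp', -⟩
    exact ⟨p'.1.1, hp', rfl⟩

end TIOTS

/-- Every locally consistent specification is consistent. -/
theorem locallyConsistent_implies_consistent {Act Q : Type} (S : TIOTS Act Q)
    (hS : S.LocallyConsistent) :
    ∃ (QP : Type) (P : TIOTS Act QP), P.IsImplementation ∧
      P.inputs = S.inputs ∧ P.outputs = S.outputs ∧ P.Refines S := by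
  obtain ⟨⟨hT, hIE⟩, hp⟩ := hS
  exact ⟨_, S.deadlineImpl hp,
    ⟨⟨S.deadlineImpl_isTIOTS hp hT, S.deadlineImpl_inputEnabled hp hT.1 hIE⟩,
      fun p => ⟨S.deadlineImpl_outputUrgent hp p, S.deadlineImpl_independentProgress hp hT p⟩⟩,
    rfl, rfl, S.deadlineImpl_refines hp hT.1⟩
end

section
/- Any locally consistent specification refining an implementation is itself an implementation: if S is a locally consistent specification in which every state is reachable from the initial state by a finite sequence of action and delay transitions, P is an implementation over the same alphabet, and S ≤ P, then S is an implementation (every state of S satisfies output urgency and independent progress). -/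
open scoped NNReal

/-- Any locally consistent specification (with all states
reachable) refining an implementation is itself an implementation. -/
theorem locallyConsistent_refining_implementation_isImplementation
    {Act Q QP : Type} (S : TIOTS Act Q) (P : TIOTS Act QP)
    (hS : S.LocallyConsistent)
    (hreach : ∀ q : Q, TIOTS.Reach S S.init q)
    (hP : P.IsImplementation)
    (hin : S.inputs = P.inputs) (hout : S.outputs = P.outputs)
    (href : S.Refines P) :
    S.IsImplementation := by
  obtain ⟨hSspec, hSprog⟩ := hS
  obtain ⟨hPspec, hPstates⟩ := hP
  obtain ⟨_, _, _, _, R, hR0, hRstep⟩ := href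
  -- R extends along reachability
  have hext : ∀ s q : Q, TIOTS.Reach S s q → ∀ t : QP, R s t → ∃ t', R q t' := by
    intro s q hreach'
    induction hreach' with
    | refl q => exact fun t ht => ⟨t, ht⟩
    | @act s s' q' a hact _ ih =>
      intro t ht
      have hacts : a ∈ S.acts := hSspec.1.2.1 _ _ _ hact
      rcases hacts with hain | haout
      · -- input: use input-enabledness of P and determinism of S
        have hainP : a ∈ P.inputs := hin ▸ hain
        obtain ⟨t', ht'⟩ := hPspec.2 t a hainP
        obtain ⟨s'', hs'', hR''⟩ :=
          (hRstep s t ht).1 a ⟨hainP, hain⟩ t' ht'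
        have : s'' = s' := hSspec.1.2.2.1 _ _ _ _ hs'' hact
        exact ih t' (this ▸ hR'')
      · have haoutP : a ∈ P.outputs := hout ▸ haout
        obtain ⟨t', ht', hR'⟩ :=
          (hRstep s t ht).2.2.1 a ⟨haout, haoutP⟩ s' hact
        exact ih t' hR'
    | @delay s s' q' d hdel _ ih =>
      intro t ht
      obtain ⟨t', _, hR'⟩ := (hRstep _ t ht).2.2.2.2 d _ hdel
      exact ih t' hR'
  refine ⟨hSspec, fun q => ⟨?_, hSprog q⟩⟩
  intro o ho q' d q'' hact hdel
  obtain ⟨t, ht⟩ := hext S.init q (hreach q) P.init hR0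
  have hoP : o ∈ P.outputs := hout ▸ ho
  obtain ⟨t', ht', _⟩ := (hRstep q t ht).2.2.1 o ⟨ho, hoP⟩ q' hact
  obtain ⟨t'', ht'', _⟩ := (hRstep q t ht).2.2.2.2 d q'' hdel
  exact (hPstates t).1 o hoP t' d t'' ht' ht''
end

section
/- Let S and T be specifications over the same alphabet, and let s ∈ Q^S and t ∈ Q^T. If there exists an implementation P over this alphabet and a state p ∈ Q^P such that simultaneously p ≤ s and p ≤ t (where for states, p ≤ s means that the specification obtained from P by taking p as initial state refines the specification obtained from S by taking s as initial state), then (s,t) ∈ cons^{S∧T}, the set of consistent states of the conjunction S ∧ T. -/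
open scoped NNReal

/-- If a common implementation state satisfies both `s` and `t`,
then `(s,t)` is a consistent state of the conjunction `S ∧ T`. -/
theorem common_implementation_mem_consSet {Act Q1 Q2 QP : Type}
    (S : TIOTS Act Q1) (T : TIOTS Act Q2) (P : TIOTS Act QP)
    (hS : S.IsSpecification) (hT : T.IsSpecification)
    (hin : S.inputs = T.inputs) (hout : S.outputs = T.outputs)
    (hP : P.IsImplementation)
    (hPin : P.inputs = S.inputs) (hPout : P.outputs = S.outputs)
    (s : Q1) (t : Q2) (p : QP)
    (hps : (P.withInit p).Refines (S.withInit s))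
    (hpt : (P.withInit p).Refines (T.withInit t)) :
    (s, t) ∈ (S.conj T).consSet := by
  obtain ⟨⟨⟨-, -, hPdetA, hPdetD, -, hPadd⟩, hPie⟩, hPstates⟩ := hP
  obtain ⟨⟨-, -, -, hSdetD, -, -⟩, hSie⟩ := hS
  obtain ⟨⟨-, -, -, hTdetD, -, -⟩, hTie⟩ := hT
  obtain ⟨-, -, -, -, Rs, hRs0, hRs⟩ := hps
  obtain ⟨-, -, -, -, Rt, hRt0, hRt⟩ := hpt
  have hPinT : P.inputs = T.inputs := hPin.trans hin
  -- input step
  have inputStep : ∀ p₀ s₀ t₀, Rs p₀ s₀ → Rt p₀ t₀ → ∀ i ∈ S.inputs,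
      ∃ p' s' t', P.actTrans p₀ i p' ∧ S.actTrans s₀ i s' ∧ T.actTrans t₀ i t' ∧
        Rs p' s' ∧ Rt p' t' := by
    intro p₀ s₀ t₀ hs ht i hi
    obtain ⟨s', hs'⟩ := hSie s₀ i hi
    obtain ⟨p1, hp1, hRp1⟩ := (hRs p₀ s₀ hs).1 i ⟨hi, hPin.symm ▸ hi⟩ s' hs'
    have hiT : i ∈ T.inputs := hin ▸ hi
    obtain ⟨t', ht'⟩ := hTie t₀ i hiT
    obtain ⟨p2, hp2, hRp2⟩ := (hRt p₀ t₀ ht).1 i ⟨hiT, hPinT.symm ▸ hiT⟩ t' ht'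
    obtain rfl := hPdetA p₀ i p1 p2 hp1 hp2
    exact ⟨p1, s', t', hp1, hs', ht', hRp1, hRp2⟩
  -- delay step
  have delayStep : ∀ p₀ s₀ t₀ (d : ℝ≥0) p', Rs p₀ s₀ → Rt p₀ t₀ → P.delayTrans p₀ d p' →
      ∃ s' t', S.delayTrans s₀ d s' ∧ T.delayTrans t₀ d t' ∧ Rs p' s' ∧ Rt p' t' := by
    intro p₀ s₀ t₀ d p' hs ht hpd
    obtain ⟨s', hds, hRs'⟩ := (hRs p₀ s₀ hs).2.2.2.2 d p' hpd
    obtain ⟨t', hdt, hRt'⟩ := (hRt p₀ t₀ ht).2.2.2.2 d p' hpd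
    exact ⟨s', t', hds, hdt, hRs', hRt'⟩
  -- output step
  have outputStep : ∀ p₀ s₀ t₀ o p', Rs p₀ s₀ → Rt p₀ t₀ → o ∈ P.outputs →
      P.actTrans p₀ o p' →
      ∃ s' t', S.actTrans s₀ o s' ∧ T.actTrans t₀ o t' ∧ Rs p' s' ∧ Rt p' t' := by
    intro p₀ s₀ t₀ o p' hs ht ho hpo
    obtain ⟨s', hos, hRs'⟩ := (hRs p₀ s₀ hs).2.2.1 o ⟨ho, hPout ▸ ho⟩ p' hpo
    obtain ⟨t', hot, hRt'⟩ := (hRt p₀ t₀ ht).2.2.1 o ⟨ho, (hPout.trans hout) ▸ ho⟩ p' hpo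
    exact ⟨s', t', hos, hot, hRs', hRt'⟩
  -- the candidate postfixed point
  refine Set.mem_sUnion.2 ⟨{q : Q1 × Q2 | ∃ p₀, Rs p₀ q.1 ∧ Rt p₀ q.2}, ?_, ⟨p, hRs0, hRt0⟩⟩
  -- inputs remain enabled into X
  have inputsX : ∀ p₀ s₀ t₀, Rs p₀ s₀ → Rt p₀ t₀ →
      ∀ i ∈ (S.conj T).inputs, ∃ q'',
        q'' ∈ {q : Q1 × Q2 | ∃ p₀, Rs p₀ q.1 ∧ Rt p₀ q.2} ∧
        (S.conj T).actTrans (s₀, t₀) i q'' := by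
    intro p₀ s₀ t₀ hs ht i hi
    have hiS : i ∈ S.inputs := by
      rcases hi with h | h
      · exact h
      · rwa [hin]
    obtain ⟨p', s', t', -, hs', ht', hRs', hRt'⟩ := inputStep p₀ s₀ t₀ hs ht i hiS
    exact ⟨(s', t'), ⟨p', hRs', hRt'⟩,
      Or.inl ⟨⟨Or.inl hiS, Or.inl (hin ▸ hiS)⟩, hs', ht'⟩⟩
  -- all d-delays land in X with inputs into X
  have leftPart : ∀ p₀ s₀ t₀ (d : ℝ≥0) (p₁ : QP), Rs p₀ s₀ → Rt p₀ t₀ →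
      P.delayTrans p₀ d p₁ →
      ∀ q' : Q1 × Q2, (S.conj T).delayTrans (s₀, t₀) d q' →
        q' ∈ {q : Q1 × Q2 | ∃ p₀, Rs p₀ q.1 ∧ Rt p₀ q.2} ∧
        ∀ i ∈ (S.conj T).inputs, ∃ q'',
          q'' ∈ {q : Q1 × Q2 | ∃ p₀, Rs p₀ q.1 ∧ Rt p₀ q.2} ∧
          (S.conj T).actTrans q' i q'' := by
    intro p₀ s₀ t₀ d p₁ hs ht hpd q' hq'
    obtain ⟨s₂, t₂, hds, hdt, hRs2, hRt2⟩ := delayStep p₀ s₀ t₀ d p₁ hs ht hpd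
    obtain ⟨s₁, t₁⟩ := q'
    obtain ⟨hq1, hq2⟩ := hq'
    obtain rfl := hSdetD s₀ d s₁ s₂ hq1 hds
    obtain rfl := hTdetD t₀ d t₁ t₂ hq2 hdt
    exact ⟨⟨p₁, hRs2, hRt2⟩, inputsX p₁ s₁ t₁ hRs2 hRt2⟩
  -- X is a postfixed point of Theta
  rintro ⟨s₀, t₀⟩ ⟨p₀, hs, ht⟩
  rcases (hPstates p₀).2 with hA | ⟨d, p', o, ho, hpd, p'', hpo⟩
  · -- p₀ can delay forever
    refine ⟨⟨Set.mem_univ _, ?_⟩, ?_⟩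
    · rintro ⟨⟨d, hnod⟩, -⟩
      obtain ⟨p', hp'⟩ := hA d
      obtain ⟨s', t', hds, hdt, -, -⟩ := delayStep p₀ s₀ t₀ d p' hs ht hp'
      exact hnod ⟨(s', t'), hds, hdt⟩
    · intro d
      obtain ⟨p', hp'⟩ := hA d
      exact Or.inl (leftPart p₀ s₀ t₀ d p' hs ht hp')
  · -- p₀ can delay then output
    obtain ⟨s', t', hds, hdt, hRs', hRt'⟩ := delayStep p₀ s₀ t₀ d p' hs ht hpd
    obtain ⟨s'', t'', hos, hot, hRs'', hRt''⟩ := outputStep p' s' t' o p'' hRs' hRt' ho hpo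
    have hoS : o ∈ S.outputs := hPout ▸ ho
    have hconjAct : (S.conj T).actTrans (s', t') o (s'', t'') :=
      Or.inl ⟨⟨Or.inr hoS, Or.inr (hout ▸ hoS)⟩, hos, hot⟩
    refine ⟨⟨Set.mem_univ _, ?_⟩, ?_⟩
    · rintro ⟨-, hall⟩
      rcases hall d o (Or.inl hoS) (s', t') ⟨hds, hdt⟩ with hne | hforall
      · exact hne ⟨(s'', t''), hconjAct⟩
      · exact (hforall (s'', t'') hconjAct).2 ⟨p'', hRs'', hRt''⟩
    · intro d₀
      rcases le_total d d₀ with h | h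
      · exact Or.inr ⟨d, h, (s', t'), (s'', t''), ⟨p', hRs', hRt'⟩, ⟨p'', hRs'', hRt''⟩,
          o, Or.inl hoS, ⟨hds, hdt⟩, hconjAct, inputsX p' s' t' hRs' hRt'⟩
      · obtain ⟨p₁, hpd₁, -⟩ := (hPadd p₀ p' d₀ (d - d₀)).1
          (by rwa [add_tsub_cancel_of_le h])
        exact Or.inl (leftPart p₀ s₀ t₀ d₀ p₁ hs ht hpd₁)
end

section
/- For any locally consistent specifications S and T over the same alphabet, the conjunction refines both conjuncts: S ∧ T ≤ S and S ∧ T ≤ T. -/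
open scoped NNReal

/-- The conjunction refines both of its conjuncts. -/
theorem conj_refines_left_and_right {Act Q1 Q2 : Type}
    (S : TIOTS Act Q1) (T : TIOTS Act Q2)
    (hS : S.LocallyConsistent) (hT : T.LocallyConsistent)
    (hin : S.inputs = T.inputs) (hout : S.outputs = T.outputs) :
    (S.conj T).Refines S ∧ (S.conj T).Refines T := by
  obtain ⟨⟨hStiots, hSie⟩, _⟩ := hS
  obtain ⟨⟨hTtiots, hTie⟩, _⟩ := hT
  obtain ⟨hSdisj, -⟩ := hStiots
  obtain ⟨hTdisj, -⟩ := hTtiots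
  constructor
  · refine ⟨?_, ?_, ?_, ?_, fun p s => p.1 = s, rfl, ?_⟩
    · show Disjoint (S.inputs ∪ T.inputs) S.outputs
      rw [← hin, Set.union_self]; exact hSdisj
    · show Disjoint (S.outputs ∪ T.outputs) S.inputs
      rw [← hout, Set.union_self]; exact hSdisj.symm
    · show S.inputs ∪ T.inputs ⊆ S.inputs
      rw [← hin, Set.union_self]
    · exact Set.subset_union_left
    · rintro p s (hR : p.1 = s)
      refine ⟨?_, ?_, ?_, ?_, ?_⟩
      · rintro a ⟨ha1, -⟩ s' hact
        obtain ⟨t2, ht2⟩ := hTie p.2 a (hin ▸ ha1)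
        refine ⟨(s', t2), Or.inl ⟨⟨Or.inl ha1, Or.inl (hin ▸ ha1)⟩, ?_, ht2⟩, rfl⟩
        rw [hR]; exact hact
      · rintro a ⟨ha1, ha2⟩ t' -
        exact absurd (Or.inl ha1) ha2
      · rintro a ⟨ha1, ha2⟩ p' hact
        rcases hact with ⟨-, hS', -⟩ | ⟨⟨-, hnT⟩, hS', -⟩ | ⟨⟨-, hnS⟩, -, -⟩
        · exact ⟨p'.1, hR ▸ hS', rfl⟩
        · exact absurd (Or.inr (hout ▸ ha2)) hnT
        · exact absurd (Or.inr ha2) hnS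
      · rintro a ⟨ha1, ha2⟩ p' -
        rcases ha1 with h | h
        · exact absurd h ha2
        · exact absurd (hout ▸ h) ha2
      · rintro d p' ⟨hSd, hTd⟩
        exact ⟨p'.1, hR ▸ hSd, rfl⟩
  · refine ⟨?_, ?_, ?_, ?_, fun p t => p.2 = t, rfl, ?_⟩
    · show Disjoint (S.inputs ∪ T.inputs) T.outputs
      rw [hin, Set.union_self]; exact hTdisj
    · show Disjoint (S.outputs ∪ T.outputs) T.inputs
      rw [hout, Set.union_self]; exact hTdisj.symm
    · show S.inputs ∪ T.inputs ⊆ T.inputs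
      rw [hin, Set.union_self]
    · exact Set.subset_union_right
    · rintro p t (hR : p.2 = t)
      refine ⟨?_, ?_, ?_, ?_, ?_⟩
      · rintro a ⟨ha1, -⟩ t' hact
        obtain ⟨s2, hs2⟩ := hSie p.1 a (hin ▸ ha1)
        refine ⟨(s2, t'), Or.inl ⟨⟨Or.inl (hin ▸ ha1), Or.inl ha1⟩, hs2, ?_⟩, rfl⟩
        rw [hR]; exact hact
      · rintro a ⟨ha1, ha2⟩ t' -
        exact absurd (Or.inr ha1) ha2
      · rintro a ⟨ha1, ha2⟩ p' hact
        rcases hact with ⟨-, -, hT'⟩ | ⟨⟨-, hnT⟩, -, -⟩ | ⟨⟨-, hnS⟩, hT', -⟩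
        · exact ⟨p'.2, hR ▸ hT', rfl⟩
        · exact absurd (Or.inr ha2) hnT
        · exact absurd (Or.inr (hout ▸ ha2)) hnS
      · rintro a ⟨ha1, ha2⟩ p' -
        rcases ha1 with h | h
        · exact absurd (hout ▸ h) ha2
        · exact absurd h ha2
      · rintro d p' ⟨hSd, hTd⟩
        exact ⟨p'.2, hR ▸ hTd, rfl⟩
end

section
/- The conjunction is a greatest lower bound with respect to refinement: for any locally consistent specifications S, T and U over the same alphabet, if U ≤ S and U ≤ T then U ≤ S ∧ T. -/
open scoped NNReal

/-- The conjunction is a greatest lower bound w.r.t. refinement. -/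
theorem refines_conj_of_refines {Act Q1 Q2 Q3 : Type}
    (S : TIOTS Act Q1) (T : TIOTS Act Q2) (U : TIOTS Act Q3)
    (hS : S.LocallyConsistent) (hT : T.LocallyConsistent) (hU : U.LocallyConsistent)
    (hin : S.inputs = T.inputs) (hout : S.outputs = T.outputs)
    (hinU : U.inputs = S.inputs) (houtU : U.outputs = S.outputs)
    (hUS : U.Refines S) (hUT : U.Refines T) :
    U.Refines (S.conj T) := by

  obtain ⟨hUtiots, _⟩ := hU.1
  have hUdisj := hUtiots.1
  have hUdet := hUtiots.2.2.1
  obtain ⟨_, _, _, _, R1, hR1init, hR1⟩ := hUS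
  obtain ⟨_, _, _, _, R2, hR2init, hR2⟩ := hUT
  have hcin : (S.conj T).inputs = U.inputs := by
    show S.inputs ∪ T.inputs = U.inputs
    rw [← hin, Set.union_self, hinU]
  have hcout : (S.conj T).outputs = U.outputs := by
    show S.outputs ∪ T.outputs = U.outputs
    rw [← hout, Set.union_self, houtU]
  have hactsST : S.acts = T.acts := by
    unfold TIOTS.acts; rw [hin, hout]
  refine ⟨?_, ?_, ?_, ?_, fun u p => R1 u p.1 ∧ R2 u p.2, ⟨hR1init, hR2init⟩, ?_⟩
  · rw [hcout]; exact hUdisj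
  · rw [hcin]; exact hUdisj.symm
  · rw [hcin]
  · rw [hcout]
  · rintro u ⟨s, t⟩ ⟨rs, rt⟩
    refine ⟨?_, ?_, ?_, ?_, ?_⟩
    · rintro a ⟨hain, hainU⟩ ⟨s', t'⟩ htr
      rcases htr with ⟨_, hSa, hTa⟩ | ⟨⟨h1, h2⟩, _⟩ | ⟨⟨h1, h2⟩, _⟩
      · have haS : a ∈ S.inputs := by
          rw [hcin, hinU] at hain
          exact hain
        have haT : a ∈ T.inputs := hin ▸ haS
        obtain ⟨u1, hu1, hr1⟩ := (hR1 u s rs).1 a ⟨haS, hinU ▸ haS⟩ s' hSa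
        obtain ⟨u2, hu2, hr2⟩ := (hR2 u t rt).1 a ⟨haT, hinU ▸ haS⟩ t' hTa
        have : u1 = u2 := hUdet u a u1 u2 hu1 hu2
        subst this
        exact ⟨u1, hu1, hr1, hr2⟩
      · exact absurd (hactsST ▸ h1) h2
      · exact absurd (hactsST.symm ▸ h1) h2
    · rintro a ⟨hain, hanotU⟩
      rw [hcin] at hain
      exact absurd hain hanotU
    · rintro a ⟨haU, haC⟩ u' huact
      have haS : a ∈ S.outputs := houtU ▸ haU
      have haT : a ∈ T.outputs := hout ▸ haS
      obtain ⟨s', hs', hr1⟩ := (hR1 u s rs).2.2.1 a ⟨haU, haS⟩ u' huact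
      obtain ⟨t', ht', hr2⟩ := (hR2 u t rt).2.2.1 a ⟨haU, haT⟩ u' huact
      exact ⟨(s', t'), Or.inl ⟨⟨Or.inr haS, Or.inr haT⟩, hs', ht'⟩, hr1, hr2⟩
    · rintro a ⟨haU, hanotC⟩ u' _
      exact absurd (hcout ▸ haU) hanotC
    · intro d u' hdel
      obtain ⟨s', hs', hr1⟩ := (hR1 u s rs).2.2.2.2 d u' hdel
      obtain ⟨t', ht', hr2⟩ := (hR2 u t rt).2.2.2.2 d u' hdel
      exact ⟨(s', t'), ⟨hs', ht'⟩, hr1, hr2⟩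
end

section
/- For any locally consistent specifications S and T over the same alphabet, the implementations of the conjunction are exactly the common implementations: mod(S ∧ T) = mod(S) ∩ mod(T). -/
open scoped NNReal

/-- `mod(S ∧ T) = mod(S) ∩ mod(T)`. -/
theorem mod_conj_eq_inter {Act Q1 Q2 : Type}
    (S : TIOTS Act Q1) (T : TIOTS Act Q2)
    (hS : S.LocallyConsistent) (hT : T.LocallyConsistent)
    (hin : S.inputs = T.inputs) (hout : S.outputs = T.outputs) :
    ∀ (QP : Type) (P : TIOTS Act QP),
      TIOTS.Mod (S.conj T) P ↔ TIOTS.Mod S P ∧ TIOTS.Mod T P := by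
  intro QP P
  have hacts : S.acts = T.acts := by
    simp only [TIOTS.acts, hin, hout]
  have hSin : (S.conj T).inputs = S.inputs := by
    show S.inputs ∪ T.inputs = S.inputs
    rw [← hin, Set.union_self]
  have hSout : (S.conj T).outputs = S.outputs := by
    show S.outputs ∪ T.outputs = S.outputs
    rw [← hout, Set.union_self]
  have hTin : (S.conj T).inputs = T.inputs := by rw [hSin, hin]
  have hTout : (S.conj T).outputs = T.outputs := by rw [hSout, hout]
  have hSdis : Disjoint S.inputs S.outputs := hS.1.1.1
  have hTdis : Disjoint T.inputs T.outputs := hT.1.1.1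
  have hTinen : T.InputEnabled := hT.1.2
  have hSinen : S.InputEnabled := hS.1.2
  constructor
  · rintro ⟨hImpl, hpi, hpo, _, _, _, _, R, hR0, hR⟩
    have hpi' : P.inputs = S.inputs := by rw [hpi, hSin]
    have hpo' : P.outputs = S.outputs := by rw [hpo, hSout]
    constructor
    · refine ⟨hImpl, hpi', hpo', ?_, ?_, ?_, ?_, fun p q1 => ∃ q2, R p (q1, q2),
        ⟨T.init, hR0⟩, ?_⟩
      · rw [hpi']; exact hSdis
      · rw [hpo']; exact hSdis.symm
      · rw [hpi']
      · rw [hpo']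
      rintro p q1 ⟨q2, hpq⟩
      refine ⟨?_, ?_, ?_, ?_, ?_⟩
      · rintro a ⟨haS, haP⟩ q1' hact
        obtain ⟨q2', hact2⟩ := hTinen q2 a (hin ▸ haS)
        obtain ⟨p', hp', hR'⟩ := (hR p (q1, q2) hpq).1 a
          ⟨Or.inl haS, haP⟩ (q1', q2')
          (Or.inl ⟨⟨Or.inl haS, Or.inl (hin ▸ haS)⟩, hact, hact2⟩)
        exact ⟨p', hp', q2', hR'⟩
      · rintro a ⟨haS, haP⟩ q1' hact
        exact absurd (hpi' ▸ haS) haP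
      · rintro a ⟨haP, haS⟩ p' hact
        obtain ⟨⟨q1', q2'⟩, hact', hR'⟩ := (hR p (q1, q2) hpq).2.2.1 a
          ⟨haP, Or.inl haS⟩ p' hact
        rcases hact' with ⟨_, h1, h2⟩ | ⟨⟨_, hna⟩, _⟩ | ⟨⟨_, hna⟩, _⟩
        · exact ⟨q1', h1, q2', hR'⟩
        · exact absurd (hacts ▸ Or.inr haS) hna
        · exact absurd (Or.inr haS : a ∈ S.acts) hna
      · rintro a ⟨haP, haS⟩ p' hact
        exact absurd (hpo' ▸ haP) haS
      · intro d p' hdel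
        obtain ⟨⟨q1', q2'⟩, ⟨hd1, hd2⟩, hR'⟩ := (hR p (q1, q2) hpq).2.2.2.2 d p' hdel
        exact ⟨q1', hd1, q2', hR'⟩
    · have hpi'' : P.inputs = T.inputs := by rw [hpi', hin]
      have hpo'' : P.outputs = T.outputs := by rw [hpo', hout]
      refine ⟨hImpl, hpi'', hpo'', ?_, ?_, ?_, ?_, fun p q2 => ∃ q1, R p (q1, q2),
        ⟨S.init, hR0⟩, ?_⟩
      · rw [hpi'']; exact hTdis
      · rw [hpo'']; exact hTdis.symm
      · rw [hpi'']
      · rw [hpo'']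
      rintro p q2 ⟨q1, hpq⟩
      refine ⟨?_, ?_, ?_, ?_, ?_⟩
      · rintro a ⟨haT, haP⟩ q2' hact
        obtain ⟨q1', hact1⟩ := hSinen q1 a (hin ▸ haT)
        obtain ⟨p', hp', hR'⟩ := (hR p (q1, q2) hpq).1 a
          ⟨Or.inr haT, haP⟩ (q1', q2')
          (Or.inl ⟨⟨Or.inl (hin ▸ haT), Or.inl haT⟩, hact1, hact⟩)
        exact ⟨p', hp', q1', hR'⟩
      · rintro a ⟨haT, haP⟩ q2' hact
        exact absurd (hpi'' ▸ haT) haP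
      · rintro a ⟨haP, haT⟩ p' hact
        obtain ⟨⟨q1', q2'⟩, hact', hR'⟩ := (hR p (q1, q2) hpq).2.2.1 a
          ⟨haP, Or.inr haT⟩ p' hact
        rcases hact' with ⟨_, h1, h2⟩ | ⟨⟨_, hna⟩, _⟩ | ⟨⟨_, hna⟩, _⟩
        · exact ⟨q2', h2, q1', hR'⟩
        · exact absurd ((Or.inr haT : a ∈ T.acts)) hna
        · exact absurd (hacts ▸ (Or.inr haT : a ∈ T.acts)) hna
      · rintro a ⟨haP, haT⟩ p' hact
        exact absurd (hpo'' ▸ haP) haT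
      · intro d p' hdel
        obtain ⟨⟨q1', q2'⟩, ⟨hd1, hd2⟩, hR'⟩ := (hR p (q1, q2) hpq).2.2.2.2 d p' hdel
        exact ⟨q2', hd2, q1', hR'⟩
  · rintro ⟨⟨hImpl, hpi, hpo, _, _, _, _, R1, hR10, hR1⟩,
      ⟨_, hpi2, hpo2, _, _, _, _, R2, hR20, hR2⟩⟩
    have hdet : ∀ q a q' q'', P.actTrans q a q' → P.actTrans q a q'' → q' = q'' :=
      hImpl.1.1.2.2.1
    refine ⟨hImpl, by rw [hpi, hSin], by rw [hpo, hSout], ?_, ?_, ?_, ?_,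
      fun p q => R1 p q.1 ∧ R2 p q.2, ⟨hR10, hR20⟩, ?_⟩
    · rw [hpi, hSout]; exact hSdis
    · rw [hpo, hSin]; exact hSdis.symm
    · rw [hpi, hSin]
    · rw [hpo, hSout]
    rintro p ⟨q1, q2⟩ ⟨hpq1, hpq2⟩
    refine ⟨?_, ?_, ?_, ?_, ?_⟩
    · rintro a ⟨haC, haP⟩ ⟨q1', q2'⟩ hact
      rcases hact with ⟨_, h1, h2⟩ | ⟨⟨_, hna⟩, _⟩ | ⟨⟨_, hna⟩, _⟩
      · obtain ⟨p', hp', hR1'⟩ := (hR1 p q1 hpq1).1 a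
          ⟨(show a ∈ S.inputs by rw [← hSin]; exact haC), haP⟩ q1' h1
        obtain ⟨p'', hp'', hR2'⟩ := (hR2 p q2 hpq2).1 a
          ⟨(show a ∈ T.inputs by rw [← hTin]; exact haC), haP⟩ q2' h2
        exact ⟨p', hp', hR1', hdet p a p'' p' hp'' hp' ▸ hR2'⟩
      · exact absurd (hacts ▸ Or.inl (show a ∈ S.inputs by rw [← hSin]; exact haC)) hna
      · exact absurd (Or.inl (show a ∈ S.inputs by rw [← hSin]; exact haC) : a ∈ S.acts) hna
    · rintro a ⟨haC, haP⟩ q' hact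
      exact absurd (show a ∈ P.inputs by rw [hpi, ← hSin]; exact haC) haP
    · rintro a ⟨haP, haC⟩ p' hact
      have haS : a ∈ S.outputs := by rw [← hSout]; exact haC
      have haT : a ∈ T.outputs := by rw [← hTout]; exact haC
      obtain ⟨q1', hq1', hR1'⟩ := (hR1 p q1 hpq1).2.2.1 a ⟨haP, haS⟩ p' hact
      obtain ⟨q2', hq2', hR2'⟩ := (hR2 p q2 hpq2).2.2.1 a ⟨haP, haT⟩ p' hact
      exact ⟨(q1', q2'),
        Or.inl ⟨⟨Or.inr haS, Or.inr haT⟩, hq1', hq2'⟩, hR1', hR2'⟩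
    · rintro a ⟨haP, haC⟩ p' hact
      exact absurd (show a ∈ (S.conj T).outputs by rw [hSout, ← hpo]; exact haP) haC
    · intro d p' hdel
      obtain ⟨q1', hq1', hR1'⟩ := (hR1 p q1 hpq1).2.2.2.2 d p' hdel
      obtain ⟨q2', hq2', hR2'⟩ := (hR2 p q2 hpq2).2.2.2.2 d p' hdel
      exact ⟨(q1', q2'), ⟨hq1', hq2'⟩, hR1', hR2'⟩
end
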